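/- For every additive group homomorphism h : ℤ⁴ → ℤ there is a lattice root α of Γ^{2,2} with h(α) = 0; hence there is no integer-valued linear height function on Γ^{2,2} that is non-vanishing on all lattice roots. -/

import Mathlib

/-!
Pair a covector `(a, b, c, d)` with `(k, l, m, n)` as `ak + bl + cm + dn`. The isometries of
`Γ^{2,2}` swapping `k ↔ l`, `m ↔ n` or the two hyperbolic planes, and the transvections
`(k, l, m, n) ↦ (k - tm, l, m, n + tl)`, act on covectors and preserve the property of vanishing
on some root. Running Euclid's algorithm with them shrinks `|a|` until `a ∣ c - d`, and then the
covector kills the root `(-(c - d)/a, 0, 1, -1)`.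
-/

/-- A lattice root of `Γ^{2,2}`: an element `(k,l,m,n)` with `kl + mn = -1`,
equivalently of norm `B(α,α) = 2`. -/
def IsLatticeRoot (α : Fin 4 → ℤ) : Prop :=
  α 0 * α 1 + α 2 * α 3 = -1

def VanishesOnRoot (a b c d : ℤ) : Prop :=
  ∃ k l m n : ℤ, k * l + m * n = -1 ∧ a * k + b * l + c * m + d * n = 0

section Moves

variable {a b c d : ℤ}

lemma vanishesOnRoot_of_swap_left (h : VanishesOnRoot b a c d) : VanishesOnRoot a b c d := by
  obtain ⟨k, l, m, n, hroot, hzero⟩ := h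
  exact ⟨l, k, m, n, by linarith, by linarith⟩

lemma vanishesOnRoot_of_swap_right (h : VanishesOnRoot a b d c) : VanishesOnRoot a b c d := by
  obtain ⟨k, l, m, n, hroot, hzero⟩ := h
  exact ⟨k, l, n, m, by linarith, by linarith⟩

lemma vanishesOnRoot_of_swap_pairs (h : VanishesOnRoot c d a b) : VanishesOnRoot a b c d := by
  obtain ⟨k, l, m, n, hroot, hzero⟩ := h
  exact ⟨m, n, k, l, by linarith, by linarith⟩

lemma vanishesOnRoot_of_transvection (t : ℤ) (h : VanishesOnRoot a (b + t * d) (c - t * a) d) :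
    VanishesOnRoot a b c d := by
  obtain ⟨k, l, m, n, hroot, hzero⟩ := h
  exact ⟨k - t * m, l, m, n + t * l, by linear_combination hroot, by linear_combination hzero⟩

lemma vanishesOnRoot_of_dvd_sub (h : a ∣ c - d) : VanishesOnRoot a b c d := by
  obtain ⟨q, hq⟩ := h
  exact ⟨-q, 0, 1, -1, by ring, by linear_combination hq⟩

end Moves

theorem vanishesOnRoot_of_ne_zero {a : ℤ} (ha : a ≠ 0) (b c d : ℤ) :
    VanishesOnRoot a b c d := by
  by_cases hcd : a ∣ c - d
  · exact vanishesOnRoot_of_dvd_sub hcd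
  have reduce {c d : ℤ} (hc : ¬ a ∣ c) : VanishesOnRoot a b c d := by
    have hmod : c - c / a * a = c % a := by linarith [Int.emod_add_mul_ediv c a]
    have hmod_ne : c % a ≠ 0 := fun h => hc (Int.dvd_of_emod_eq_zero h)
    have hmod_lt : (c % a).natAbs < a.natAbs := by
      have := Int.emod_lt c ha
      have := Int.emod_nonneg c ha
      omega
    refine vanishesOnRoot_of_transvection (c / a) (vanishesOnRoot_of_swap_pairs ?_)
    rw [hmod]
    exact vanishesOnRoot_of_ne_zero hmod_ne _ _ _
  by_cases hc : a ∣ c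
  · exact vanishesOnRoot_of_swap_right (reduce fun hd => hcd (dvd_sub hc hd))
  · exact reduce hc
termination_by a.natAbs
decreasing_by exact hmod_lt

theorem vanishesOnRoot (a b c d : ℤ) : VanishesOnRoot a b c d := by
  rcases ne_or_eq a 0 with ha | rfl
  · exact vanishesOnRoot_of_ne_zero ha b c d
  rcases ne_or_eq b 0 with hb | rfl
  · exact vanishesOnRoot_of_swap_left (vanishesOnRoot_of_ne_zero hb 0 c d)
  rcases ne_or_eq c 0 with hc | rfl
  · exact vanishesOnRoot_of_swap_pairs (vanishesOnRoot_of_ne_zero hc d 0 0)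
  rcases ne_or_eq d 0 with hd | rfl
  · exact vanishesOnRoot_of_swap_pairs
      (vanishesOnRoot_of_swap_left (vanishesOnRoot_of_ne_zero hd 0 0 0))
  exact ⟨1, -1, 0, 0, by norm_num, by norm_num⟩

lemma AddMonoidHom.apply_eq_sum_smul_single {ι M : Type*} [Fintype ι] [DecidableEq ι]
    [AddCommGroup M] (h : (ι → ℤ) →+ M) (α : ι → ℤ) :
    h α = ∑ i, α i • h (Pi.single i 1) := by
  conv_lhs => rw [← Finset.univ_sum_single α]
  rw [map_sum]
  refine Finset.sum_congr rfl fun i _ => ?_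
  rw [← map_zsmul, ← Pi.single_smul', smul_eq_mul, mul_one]

theorem no_integral_height_function (h : (Fin 4 → ℤ) →+ ℤ) :
    ∃ α : Fin 4 → ℤ, IsLatticeRoot α ∧ h α = 0 := by
  obtain ⟨k, l, m, n, hroot, hzero⟩ := vanishesOnRoot (h (Pi.single 0 1)) (h (Pi.single 1 1))
    (h (Pi.single 2 1)) (h (Pi.single 3 1))
  refine ⟨![k, l, m, n], hroot, ?_⟩
  rw [h.apply_eq_sum_smul_single, Fin.sum_univ_four]
  simpa [mul_comm] using hzero
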